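/- arXiv:1110.3200 — 2 statements merged into one kernel-verified Lean document; each statement's English description precedes it below -/
import Mathlib

section
/- Let G be a linearly ordered abelian group and n ∈ ℕ with n ≥ 2. Then the following two sets of convex subgroups of G are equal: {H_{n,a} : a ∈ G} = ⋃_{p prime, p ∣ n} {H_{p,a} : a ∈ G}. -/
open Pointwise

/-- The set `nG = {n·g : g ∈ G}`. -/
def NG (G : Type*) [AddCommGroup G] (n : ℕ) : Set G :=
  {x : G | ∃ g : G, n • g = x}

/-- `H` is a convex subgroup of the linearly ordered abelian group `G`. -/
def IsConvexSubgroup {G : Type*} [AddCommGroup G] [LinearOrder G] [IsOrderedAddMonoid G] (H : Set G) : Prop :=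
  (0 : G) ∈ H ∧ (∀ x ∈ H, ∀ y ∈ H, x + y ∈ H) ∧ (∀ x ∈ H, -x ∈ H) ∧
    ∀ a ∈ H, ∀ b : G, 0 ≤ b → b ≤ a → b ∈ H

/-- `H_{n,a}`: the largest convex subgroup `H` with `a ∉ H + nG` (it is the union of
all such subgroups), and `{0}` if `a ∈ nG` (in which case the union is empty). -/
def Hna {G : Type*} [AddCommGroup G] [LinearOrder G] [IsOrderedAddMonoid G] (n : ℕ) (a : G) : Set G :=
  {0} ∪ ⋃₀ {H : Set G | IsConvexSubgroup H ∧ a ∉ H + NG G n}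

/-- `H'_{n,b} = ⋃ {H_{n,a} : a ∈ G, b ∉ H_{n,a}}`, with `{0}` for the empty union. -/
def Hnb' {G : Type*} [AddCommGroup G] [LinearOrder G] [IsOrderedAddMonoid G] (n : ℕ) (b : G) : Set G :=
  {0} ∪ ⋃₀ {H : Set G | ∃ a : G, H = Hna n a ∧ b ∉ Hna n a}

/-- `G^{[n]}_C = ⋂ {H + nG : H convex subgroup, H ⊋ C}`, with `G` for the empty
intersection. -/
def Gbr {G : Type*} [AddCommGroup G] [LinearOrder G] [IsOrderedAddMonoid G] (C : Set G) (n : ℕ) : Set G :=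
  ⋂₀ {S : Set G | ∃ H : Set G, IsConvexSubgroup H ∧ C ⊂ H ∧ S = H + NG G n}

/-!
Write `C = H_{n,a}` and let `p` be a prime factor of `n = p * m`. If `a ∉ C + pG`, then `C` is
also the largest convex subgroup avoiding `a` modulo `pG`, i.e. `C = H_{p,a}`. Otherwise
`a = c + p b` with `c ∈ C`, and then `C = H_{m,b}`: a convex `H ⊇ C` that contains `b` modulo
`mG` contains `p (b - m g) = (a - n g) - c` for some `g`, hence `b - m g` itself, since convex
subgroups are closed under division by nonzero integers. Induction on `n` finishes one inclusion.
Conversely `H_{p,a} = H_{n, m a}`, by the same divisibility closure.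
-/

theorem NG_subset_NG_of_dvd {G : Type*} [AddCommGroup G] {p n : ℕ} (h : p ∣ n) :
    NG G n ⊆ NG G p := by
  obtain ⟨m, rfl⟩ := h
  rintro _ ⟨g, rfl⟩
  exact ⟨m • g, (mul_nsmul' g p m).symm⟩

theorem mem_add_NG_iff {G : Type*} [AddCommGroup G] {H : Set G} {n : ℕ} {a : G} :
    a ∈ H + NG G n ↔ ∃ g : G, a - n • g ∈ H := by
  constructor
  · rintro ⟨h, hh, _, ⟨g, rfl⟩, rfl⟩
    exact ⟨g, by rwa [add_sub_cancel_right]⟩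
  · rintro ⟨g, hg⟩
    exact ⟨_, hg, _, ⟨g, rfl⟩, sub_add_cancel a _⟩

section ConvexSubgroups

variable {G : Type*} [AddCommGroup G] [LinearOrder G] [IsOrderedAddMonoid G]

namespace IsConvexSubgroup

variable {H : Set G}

def toAddSubgroup (hH : IsConvexSubgroup H) : AddSubgroup G where
  carrier := H
  zero_mem' := hH.1
  add_mem' {x y} hx hy := hH.2.1 x hx y hy
  neg_mem' := hH.2.2.1 _

theorem mem_of_abs_le (hH : IsConvexSubgroup H) {x y : G} (hx : x ∈ H) (hyx : |y| ≤ |x|) :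
    y ∈ H :=
  abs_mem_iff (H := hH.toAddSubgroup) (x := y) |>.1 <|
    hH.2.2.2 _ (abs_mem_iff (H := hH.toAddSubgroup) (x := x) |>.2 hx) _ (abs_nonneg y) hyx

theorem mem_of_nsmul_mem (hH : IsConvexSubgroup H) {k : ℕ} (hk : k ≠ 0) {x : G}
    (hx : k • x ∈ H) : x ∈ H :=
  hH.mem_of_abs_le hx (by rw [abs_nsmul]; exact le_self_nsmul (abs_nonneg x) hk)

theorem subset_or_subset {H' : Set G} (hH : IsConvexSubgroup H) (hH' : IsConvexSubgroup H') :
    H ⊆ H' ∨ H' ⊆ H := by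
  rw [or_iff_not_imp_left, Set.not_subset]
  rintro ⟨x, hxH, hxH'⟩ y hyH'
  by_contra hyH
  rcases le_total |x| |y| with hxy | hyx
  · exact hxH' (hH'.mem_of_abs_le hyH' hxy)
  · exact hyH (hH.mem_of_abs_le hxH hyx)

theorem sUnion {S : Set (Set G)} (hS : S.Nonempty) (h : ∀ H ∈ S, IsConvexSubgroup H) :
    IsConvexSubgroup (⋃₀ S) := by
  obtain ⟨H₀, hH₀⟩ := hS
  refine ⟨⟨H₀, hH₀, (h H₀ hH₀).1⟩, ?_, ?_, ?_⟩
  · rintro x ⟨H₁, hH₁, hx⟩ y ⟨H₂, hH₂, hy⟩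
    rcases (h H₁ hH₁).subset_or_subset (h H₂ hH₂) with h₁₂ | h₂₁
    · exact ⟨H₂, hH₂, (h H₂ hH₂).2.1 _ (h₁₂ hx) _ hy⟩
    · exact ⟨H₁, hH₁, (h H₁ hH₁).2.1 _ hx _ (h₂₁ hy)⟩
  · rintro x ⟨H₁, hH₁, hx⟩
    exact ⟨H₁, hH₁, (h H₁ hH₁).2.2.1 _ hx⟩
  · rintro x ⟨H₁, hH₁, hx⟩ y hy hyx
    exact ⟨H₁, hH₁, (h H₁ hH₁).2.2.2 _ hx _ hy hyx⟩

end IsConvexSubgroup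

theorem isConvexSubgroup_zero : IsConvexSubgroup ({0} : Set G) :=
  ⟨rfl, by simp, by simp, fun _ ha _ hb hba => le_antisymm (ha ▸ hba) hb⟩

theorem isConvexSubgroup_Hna (n : ℕ) (a : G) : IsConvexSubgroup (Hna n a) := by
  rw [Hna, ← Set.sUnion_insert]
  refine IsConvexSubgroup.sUnion (Set.insert_nonempty _ _) ?_
  rintro H (rfl | hH)
  exacts [isConvexSubgroup_zero, hH.1]

section Hna

variable {n : ℕ} {a : G}

theorem subset_Hna {H : Set G} (hH : IsConvexSubgroup H) (ha : a ∉ H + NG G n) :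
    H ⊆ Hna n a :=
  fun _ hx => Or.inr ⟨H, ⟨hH, ha⟩, hx⟩

theorem Hna_of_mem_NG (ha : a ∈ NG G n) : Hna n a = {0} := by
  refine subset_antisymm ?_ Set.subset_union_left
  rintro x (hx | ⟨H, ⟨hH, haH⟩, -⟩)
  · exact hx
  · exact absurd ⟨0, hH.1, a, ha, zero_add a⟩ haH

theorem not_mem_Hna_add_NG (ha : a ∉ NG G n) : a ∉ Hna n a + NG G n := by
  rw [mem_add_NG_iff]
  rintro ⟨g, (hg | ⟨H, ⟨hH, haH⟩, hgH⟩)⟩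
  · exact ha ⟨g, (sub_eq_zero.1 hg).symm⟩
  · exact haH (mem_add_NG_iff.2 ⟨g, hgH⟩)

theorem Hna_eq_of_isGreatest {C : Set G}
    (hC : IsGreatest {H : Set G | IsConvexSubgroup H ∧ a ∉ H + NG G n} C) : Hna n a = C := by
  refine subset_antisymm ?_ (subset_Hna hC.1.1 hC.1.2)
  rintro x (rfl | ⟨H, hH, hx⟩)
  exacts [hC.1.1.1, hC.2 hH hx]

theorem Hna_eq_Hna_mul_nsmul (p : ℕ) {m : ℕ} (hm : m ≠ 0) (a : G) :
    Hna p a = Hna (p * m) (m • a) := by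
  suffices h : ∀ H : Set G, IsConvexSubgroup H →
      (a ∈ H + NG G p ↔ m • a ∈ H + NG G (p * m)) by
    simp only [Hna]
    congr 2
    ext H
    exact and_congr_right fun hH => not_congr (h H hH)
  intro H hH
  simp only [mem_add_NG_iff]
  refine exists_congr fun g => ?_
  rw [show m • a - (p * m) • g = m • (a - p • g) by rw [smul_sub, smul_smul, mul_comm]]
  exact ⟨fun hg => hH.toAddSubgroup.nsmul_mem (x := a - p • g) hg m, hH.mem_of_nsmul_mem hm⟩

theorem Hna_eq_Hna_of_dvd {p : ℕ} (hpn : p ∣ n) (ha : a ∉ Hna n a + NG G p) :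
    Hna n a = Hna p a := by
  refine (Hna_eq_of_isGreatest ⟨⟨isConvexSubgroup_Hna n a, ha⟩, ?_⟩).symm
  rintro H ⟨hH, haH⟩
  exact subset_Hna hH fun h => haH (Set.add_subset_add_left (NG_subset_NG_of_dvd hpn) h)

theorem Hna_mul_eq_Hna {p m : ℕ} (hp : p ≠ 0) (ha : a ∉ NG G (p * m)) {b : G}
    (hb : a - p • b ∈ Hna (p * m) a) : Hna (p * m) a = Hna m b := by
  have hC := isConvexSubgroup_Hna (p * m) a
  have key : ∀ g : G, a - (p * m) • g = (a - p • b) + p • (b - m • g) := fun g => by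
    rw [smul_sub, mul_nsmul']
    abel
  refine (Hna_eq_of_isGreatest ⟨⟨hC, ?_⟩, ?_⟩).symm
  · rw [mem_add_NG_iff]
    rintro ⟨g, hg⟩
    refine not_mem_Hna_add_NG ha (mem_add_NG_iff.2 ⟨g, ?_⟩)
    rw [key]
    exact hC.toAddSubgroup.add_mem (x := a - p • b) hb
      (hC.toAddSubgroup.nsmul_mem (x := b - m • g) hg p)
  rintro H ⟨hH, hbH⟩
  refine (hH.subset_or_subset hC).elim id fun hCH => subset_Hna hH ?_
  rw [mem_add_NG_iff] at hbH ⊢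
  rintro ⟨g, hg⟩
  refine hbH ⟨g, hH.mem_of_nsmul_mem hp ?_⟩
  rw [eq_sub_of_add_eq' (key g).symm]
  exact hH.toAddSubgroup.sub_mem (x := a - (p * m) • g) hg (hCH hb)

theorem exists_prime_dvd_Hna_eq (hn : 2 ≤ n) (a : G) :
    ∃ p, p.Prime ∧ p ∣ n ∧ ∃ b : G, Hna n a = Hna p b := by
  induction n using Nat.strong_induction_on generalizing a with
  | _ n ih =>
  obtain ⟨p, hp, m, rfl⟩ := Nat.exists_prime_and_dvd (n := n) (by omega)
  by_cases haN : a ∈ NG G (p * m)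
  · refine ⟨p, hp, dvd_mul_right p m, 0, ?_⟩
    rw [Hna_of_mem_NG haN, Hna_of_mem_NG ⟨0, smul_zero p⟩]
  by_cases hap : a ∈ Hna (p * m) a + NG G p
  swap
  · exact ⟨p, hp, dvd_mul_right p m, a, Hna_eq_Hna_of_dvd (dvd_mul_right p m) hap⟩
  obtain ⟨b, hb⟩ := mem_add_NG_iff.1 hap
  have hm1 : m ≠ 1 := by
    rintro rfl
    rw [mul_one] at haN hap
    exact not_mem_Hna_add_NG haN hap
  have hm : 2 ≤ m := by
    rcases m with _ | _ | m <;> omega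
  obtain ⟨q, hq, hqm, c, hc⟩ := ih m (by nlinarith [hp.two_le]) hm b
  exact ⟨q, hq, hqm.mul_left p, c, (Hna_mul_eq_Hna hp.ne_zero haN hb).trans hc⟩

end Hna

end ConvexSubgroups

/-- For `n ≥ 2`, the set of convex subgroups of the form `H_{n,a}`
equals the union over prime divisors `p` of `n` of the sets of subgroups `H_{p,a}`. -/
theorem Hna_range_eq_union_primes {G : Type*} [AddCommGroup G] [LinearOrder G] [IsOrderedAddMonoid G]
    (n : ℕ) (hn : 2 ≤ n) :
    {H : Set G | ∃ a : G, H = Hna n a} =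
      ⋃ p ∈ {p : ℕ | p.Prime ∧ p ∣ n}, {H : Set G | ∃ a : G, H = Hna p a} := by
  ext H
  simp only [Set.mem_ofPred_eq, Set.mem_iUnion, exists_prop]
  constructor
  · rintro ⟨a, rfl⟩
    obtain ⟨p, hp, hpn, b, hb⟩ := exists_prime_dvd_Hna_eq hn a
    exact ⟨p, ⟨hp, hpn⟩, b, hb⟩
  · rintro ⟨p, ⟨-, m, rfl⟩, a, rfl⟩
    exact ⟨m • a, Hna_eq_Hna_mul_nsmul p (by rintro rfl; omega) a⟩
end

section
/- Let G be a linearly ordered abelian group, p a prime, r, s ∈ ℕ with s ≥ r, C ⊆ G a convex subgroup, and x ∈ G. If x ∈ G^{[p^s]}_C + p^rG and x ∉ C + p^rG, then C = H_{p^r,x}. -/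
open Pointwise

/-!
Idea: since `p ^ r ∣ p ^ s`, every convex subgroup `H ⊋ C` satisfies
`G^{[p^s]}_C + p^r G ⊆ H + p^s G + p^r G ⊆ H + p^r G`, so `x ∈ H + p^r G`.
Thus `C` is the largest convex subgroup avoiding `x` modulo `p^r G`, because convex
subgroups are totally ordered by inclusion.
-/

theorem NG_add_NG_subset_of_dvd {G : Type*} [AddCommGroup G] {m n : ℕ} (hmn : m ∣ n) :
    NG G n + NG G m ⊆ NG G m := by
  obtain ⟨k, rfl⟩ := hmn
  rintro _ ⟨_, ⟨u, rfl⟩, _, ⟨v, rfl⟩, rfl⟩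
  exact ⟨k • u + v, by rw [smul_add, mul_smul]⟩

section ConvexSubgroup

variable {G : Type*} [AddCommGroup G] [LinearOrder G] [IsOrderedAddMonoid G]

namespace IsConvexSubgroup

theorem abs_mem_iff {H : Set G} (hH : IsConvexSubgroup H) {a : G} : |a| ∈ H ↔ a ∈ H := by
  rcases abs_choice a with h | h <;> rw [h]
  exact ⟨fun ha => neg_neg a ▸ hH.2.2.1 _ ha, hH.2.2.1 a⟩

theorem subset_of_not_subset {H C : Set G} (hH : IsConvexSubgroup H) (hC : IsConvexSubgroup C)
    (h : ¬H ⊆ C) : C ⊆ H := by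
  obtain ⟨a, haH, haC⟩ := Set.not_subset.mp h
  intro c hc
  rw [← hH.abs_mem_iff]
  rcases le_total |c| |a| with hle | hle
  · exact hH.2.2.2 _ (hH.abs_mem_iff.2 haH) _ (abs_nonneg c) hle
  · exact absurd (hC.abs_mem_iff.1 (hC.2.2.2 _ (hC.abs_mem_iff.2 hc) _ (abs_nonneg a) hle)) haC

end IsConvexSubgroup

theorem Gbr_add_NG_subset {C H : Set G} (hH : IsConvexSubgroup H) (hCH : C ⊂ H) {m n : ℕ}
    (hmn : m ∣ n) : Gbr C n + NG G m ⊆ H + NG G m :=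
  calc Gbr C n + NG G m ⊆ H + NG G n + NG G m :=
        Set.add_subset_add_right (Set.sInter_subset_of_mem ⟨H, hH, hCH, rfl⟩)
    _ = H + (NG G n + NG G m) := add_assoc _ _ _
    _ ⊆ H + NG G m := Set.add_subset_add_left (NG_add_NG_subset_of_dvd hmn)

theorem eq_Hna_of_forall_ssuperset {C : Set G} (hC : IsConvexSubgroup C) {n : ℕ} {x : G}
    (hxC : x ∉ C + NG G n) (hsup : ∀ H, IsConvexSubgroup H → C ⊂ H → x ∈ H + NG G n) :
    C = Hna n x := by
  refine subset_antisymm (fun c hc => Or.inr ⟨C, ⟨hC, hxC⟩, hc⟩) ?_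
  rintro y (rfl | ⟨H, ⟨hH, hxH⟩, hyH⟩)
  · exact hC.1
  · by_contra hyC
    have hHC : ¬H ⊆ C := fun hs => hyC (hs hyH)
    exact hxH (hsup H hH ⟨hH.subset_of_not_subset hC hHC, hHC⟩)

end ConvexSubgroup

theorem eq_Hna_of_mem_Gbr_general {G : Type*} [AddCommGroup G] [LinearOrder G] [IsOrderedAddMonoid G]
    (p : ℕ) (r s : ℕ) (hrs : r ≤ s)
    (C : Set G) (hC : IsConvexSubgroup C) (x : G)
    (h1 : x ∈ Gbr C (p ^ s) + NG G (p ^ r)) (h2 : x ∉ C + NG G (p ^ r)) :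
    C = Hna (p ^ r) x :=
  eq_Hna_of_forall_ssuperset hC h2 fun _ hH hCH =>
    Gbr_add_NG_subset hH hCH (pow_dvd_pow p hrs) h1

/-- Let `p` be prime, `r, s ∈ ℕ` with `s ≥ r ≥ 1`, `C` a convex
subgroup, and `x ∈ G`. If `x ∈ G^{[p^s]}_C + p^r G` and `x ∉ C + p^r G`, then
`C = H_{p^r, x}`. -/
theorem eq_Hna_of_mem_Gbr {G : Type*} [AddCommGroup G] [LinearOrder G] [IsOrderedAddMonoid G]
    (p : ℕ) (hp : p.Prime) (r s : ℕ) (hr : 1 ≤ r) (hrs : r ≤ s)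
    (C : Set G) (hC : IsConvexSubgroup C) (x : G)
    (h1 : x ∈ Gbr C (p ^ s) + NG G (p ^ r)) (h2 : x ∉ C + NG G (p ^ r)) :
    C = Hna (p ^ r) x :=
  eq_Hna_of_mem_Gbr_general p r s hrs C hC x h1 h2
end
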